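/- For probability measures P, Q with χ²(P ‖ Q) finite and any positive integer k, the χ²-divergence of product measures satisfies χ²(P^{⊗k} ‖ Q^{⊗k}) = (1 + χ²(P ‖ Q))^k − 1. -/

import Mathlib

open MeasureTheory
open scoped ENNReal

/-!
The density of `P^⊗k` with respect to `Q^⊗k` is `x ↦ ∏ i, (dP/dQ)(x i)`: both sides agree on
boxes by Tonelli. Its square is again a product of functions of single coordinates, so Fubini
gives `∫ (dP^⊗k/dQ^⊗k)² dQ^⊗k = (∫ (dP/dQ)² dQ)^k`.
-/

namespace MeasureTheory

theorem lintegral_fin_nat_prod_eq_prod {n : ℕ} {E : Fin n → Type*}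
    {mE : ∀ i, MeasurableSpace (E i)} {μ : (i : Fin n) → Measure (E i)} [∀ i, SigmaFinite (μ i)]
    {f : (i : Fin n) → E i → ℝ≥0∞} (hf : ∀ i, Measurable (f i)) :
    ∫⁻ x : (i : Fin n) → E i, ∏ i, f i (x i) ∂(Measure.pi μ) = ∏ i, ∫⁻ x, f i x ∂(μ i) := by
  induction n with
  | zero => simp
  | succ n ih =>
    have hprod : Measurable fun x : (i : Fin n) → E i.succ => ∏ i, f i.succ (x i) :=
      Finset.measurable_prod _ fun i _ => (hf i.succ).comp (measurable_pi_apply i)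
    calc
      _ = ∫⁻ x : E 0 × ((i : Fin n) → E i.succ), f 0 x.1 * ∏ i : Fin n, f i.succ (x.2 i)
            ∂((μ 0).prod (Measure.pi fun i ↦ μ i.succ)) := by
        rw [← ((measurePreserving_piFinSuccAbove μ 0).symm).lintegral_comp_emb
          (MeasurableEquiv.measurableEmbedding _)]
        simp_rw [MeasurableEquiv.piFinSuccAbove_symm_apply, Fin.insertNthEquiv,
          Fin.prod_univ_succ, Fin.insertNth_zero, Equiv.coe_fn_mk, Fin.cons_succ, Fin.cons_zero]
        rfl
      _ = (∫⁻ x, f 0 x ∂μ 0) * ∏ i : Fin n, ∫⁻ x, f i.succ x ∂(μ i.succ) := by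
        rw [lintegral_prod_mul (hf 0).aemeasurable hprod.aemeasurable, ih fun i => hf i.succ]
      _ = ∏ i, ∫⁻ x, f i x ∂(μ i) := (Fin.prod_univ_succ fun i => ∫⁻ x, f i x ∂(μ i)).symm

theorem lintegral_fintype_prod_eq_prod {ι : Type*} [Fintype ι] {E : ι → Type*}
    {mE : ∀ i, MeasurableSpace (E i)} {μ : (i : ι) → Measure (E i)} [∀ i, SigmaFinite (μ i)]
    {f : (i : ι) → E i → ℝ≥0∞} (hf : ∀ i, Measurable (f i)) :
    ∫⁻ x : (i : ι) → E i, ∏ i, f i (x i) ∂(Measure.pi μ) = ∏ i, ∫⁻ x, f i x ∂(μ i) := by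
  let e := (Fintype.equivFin ι).symm
  rw [← (measurePreserving_piCongrLeft _ e).lintegral_comp_emb
    (MeasurableEquiv.measurableEmbedding _)]
  simp_rw [← e.prod_comp, MeasurableEquiv.coe_piCongrLeft, Equiv.piCongrLeft_apply_apply]
  exact lintegral_fin_nat_prod_eq_prod fun i => hf (e i)

namespace Measure

variable {ι : Type*} [Fintype ι] {α : ι → Type*} [∀ i, MeasurableSpace (α i)]
  {μ ν : (i : ι) → Measure (α i)} [∀ i, SigmaFinite (μ i)] [∀ i, SigmaFinite (ν i)]

theorem pi_eq_withDensity_prod {f : (i : ι) → α i → ℝ≥0∞} (hf : ∀ i, Measurable (f i))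
    (hν : ∀ i, (μ i).withDensity (f i) = ν i) :
    Measure.pi ν = (Measure.pi μ).withDensity fun x => ∏ i, f i (x i) := by
  refine pi_eq fun s hs => ?_
  rw [withDensity_apply _ (MeasurableSet.univ_pi hs), restrict_pi_pi,
    lintegral_fintype_prod_eq_prod hf]
  simp_rw [← hν, withDensity_apply _ (hs _)]

theorem rnDeriv_pi (hμν : ∀ i, μ i ≪ ν i) :
    (Measure.pi μ).rnDeriv (Measure.pi ν)
      =ᵐ[Measure.pi ν] fun x => ∏ i, (μ i).rnDeriv (ν i) (x i) := by
  have hmeas : Measurable fun x : (i : ι) → α i => ∏ i, (μ i).rnDeriv (ν i) (x i) :=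
    Finset.measurable_prod _ fun i _ => (measurable_rnDeriv _ _).comp (measurable_pi_apply i)
  rw [pi_eq_withDensity_prod (μ := ν) (fun i => measurable_rnDeriv _ _)
    fun i => withDensity_rnDeriv_eq _ _ (hμν i)]
  exact rnDeriv_withDensity _ hmeas

end Measure

theorem integral_rnDeriv_pi_sq {α : Type*} [MeasurableSpace α] {ι : Type*} [Fintype ι]
    {P Q : Measure α} [SigmaFinite P] [SigmaFinite Q] (hPQ : P ≪ Q) :
    ∫ x, (((Measure.pi fun _ : ι => P).rnDeriv (Measure.pi fun _ : ι => Q) x).toReal) ^ 2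
        ∂(Measure.pi fun _ : ι => Q)
      = (∫ x, ((P.rnDeriv Q x).toReal) ^ 2 ∂Q) ^ Fintype.card ι := by
  rw [← integral_fintype_prod_eq_pow]
  refine integral_congr_ae ((Measure.rnDeriv_pi fun _ => hPQ).mono fun x hx => ?_)
  simp only [hx, ENNReal.toReal_prod, Finset.prod_pow]

end MeasureTheory

theorem chiSq_prod_general {α : Type*} [MeasurableSpace α]
    (P Q : Measure α) [IsProbabilityMeasure P] [IsProbabilityMeasure Q]
    (hPQ : P ≪ Q)
    (k : ℕ) :
    (∫ y, (((Measure.pi (fun _ : Fin k => P)).rnDeriv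
        (Measure.pi (fun _ : Fin k => Q)) y).toReal) ^ 2
        ∂(Measure.pi (fun _ : Fin k => Q))) - 1
      = (1 + ((∫ x, ((P.rnDeriv Q x).toReal) ^ 2 ∂Q) - 1)) ^ k - 1 := by
  rw [integral_rnDeriv_pi_sq hPQ, Fintype.card_fin, add_sub_cancel]

/-- Tensorization of the χ²-divergence: for probability measures `P ≪ Q` with
`χ²(P ‖ Q) = ∫ (dP/dQ)² dQ - 1` finite, and any positive integer `k`,
`χ²(P^⊗k ‖ Q^⊗k) = (1 + χ²(P ‖ Q))^k - 1`. -/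
theorem chiSq_prod {α : Type*} [MeasurableSpace α]
    (P Q : Measure α) [IsProbabilityMeasure P] [IsProbabilityMeasure Q]
    (hPQ : P ≪ Q)
    (hint : Integrable (fun x => ((P.rnDeriv Q x).toReal) ^ 2) Q)
    (k : ℕ) (hk : 0 < k) :
    (∫ y, (((Measure.pi (fun _ : Fin k => P)).rnDeriv
        (Measure.pi (fun _ : Fin k => Q)) y).toReal) ^ 2
        ∂(Measure.pi (fun _ : Fin k => Q))) - 1
      = (1 + ((∫ x, ((P.rnDeriv Q x).toReal) ^ 2 ∂Q) - 1)) ^ k - 1 :=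
  chiSq_prod_general P Q hPQ k
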